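/- arXiv:1009.4243 — 5 statements merged into one kernel-verified Lean document; each statement's English description precedes it below -/
import Mathlib

section
/- In the setting of the construction Γ̃ from a complex Γ with covering subcomplexes Γ₁,…,Γ_m and new vertices y₁,…,y_m, the matching on the Hasse diagram of Γ̃ defined as follows is a complete acyclic matching: for each face σ ∈ Γ with Y_σ = { y_j : σ ∈ Γ_j } nonempty, letting j be minimal with y_j ∈ Y_σ, match σ ∪ τ with σ ∪ τ ∪ {y_j} for every τ ⊆ Y_σ with y_j ∉ τ. -/
/-- An (abstract) simplicial complex on a vertex type `V`. -/
structure SComplex (V : Type*) where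
  faces : Set (Finset V)
  down_closed : ∀ {F G : Finset V}, F ∈ faces → G ⊆ F → G ∈ faces

variable {V : Type*} [DecidableEq V] {m : ℕ}

/-- The face set of `Γ̃`: all sets `σ ∪ τ` with `σ ∈ Γ`, `τ ⊆ Y_σ = {y_j : σ ∈ Γ_j}`,
where the new vertex `y_j` is coded as `Sum.inr j`. -/
def tildeFaces (Γ : SComplex V) (Γs : Fin m → SComplex V) :
    Set (Finset (V ⊕ Fin m)) :=
  {S | ∃ σ ∈ Γ.faces, ∃ τ : Finset (Fin m), (∀ j ∈ τ, σ ∈ (Γs j).faces) ∧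
    S = σ.image Sum.inl ∪ τ.image Sum.inr}

/-- The `x`-part of a face of `Γ̃`. -/
noncomputable def sigmaPart (F : Finset (V ⊕ Fin m)) : Finset V :=
  F.preimage Sum.inl Sum.inl_injective.injOn

/-- The matching: `F` and `F'` are matched iff they differ exactly by the vertex
`y_{j₀}`, where `j₀` is the least index with `σ_F ∈ Γ_{j₀}` (so `y_{j₀}` is the least
element of `Y_{σ_F}`). -/
def Matched (Γs : Fin m → SComplex V) (F F' : Finset (V ⊕ Fin m)) : Prop :=
  ∃ j₀ : Fin m,
    (sigmaPart F ∈ (Γs j₀).faces ∧ ∀ j, sigmaPart F ∈ (Γs j).faces → j₀ ≤ j) ∧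
    ((Sum.inr j₀ ∉ F ∧ F' = insert (Sum.inr j₀) F) ∨
      (Sum.inr j₀ ∉ F' ∧ F = insert (Sum.inr j₀) F'))

/-- One step of the modified Hasse diagram of `Γ̃`: matched edges are oriented
upward (towards the larger face) and all other Hasse edges downward. -/
def HasseStep (Γ : SComplex V) (Γs : Fin m → SComplex V)
    (F F' : Finset (V ⊕ Fin m)) : Prop :=
  F ∈ tildeFaces Γ Γs ∧ F' ∈ tildeFaces Γ Γs ∧
    (((∃ w ∉ F, F' = insert w F) ∧ Matched Γs F F') ∨
      ((∃ w ∉ F', F = insert w F') ∧ ¬ Matched Γs F F'))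

/-!
Give a face `F = σ ∪ τ` of `Γ̃` the rank `2 (|σ| + |F|) + 3·[F is the lower face of its matched
pair]`. An upward (matched) step adds the least `y_j` of `Y_σ` and switches the bracket off, so
the rank falls by `1`. A downward step removing some `x` lowers `2 (|σ| + |F|)` by `4`, more than
the bracket can gain. A downward step removing some `y_j` lowers `2 |F|` by `2`, and the bracket
cannot switch on, since `y_j` is not the least element of `Y_σ` (the step would be matched
otherwise). So the rank strictly decreases along every step, and there is no directed cycle.
-/

open Finset

theorem matched_iff {Γs : Fin m → SComplex V} {F F' : Finset (V ⊕ Fin m)} :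
    Matched Γs F F' ↔ ∃ j₀, IsLeast {j | sigmaPart F ∈ (Γs j).faces} j₀ ∧
      ((Sum.inr j₀ ∉ F ∧ F' = insert (Sum.inr j₀) F) ∨
        (Sum.inr j₀ ∉ F' ∧ F = insert (Sum.inr j₀) F')) :=
  Iff.rfl

@[simp]
theorem sigmaPart_insert_inl (F : Finset (V ⊕ Fin m)) (v : V) :
    sigmaPart (insert (Sum.inl v) F) = insert v (sigmaPart F) := by
  ext; simp [sigmaPart]

@[simp]
theorem sigmaPart_insert_inr (F : Finset (V ⊕ Fin m)) (j : Fin m) :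
    sigmaPart (insert (Sum.inr j) F) = sigmaPart F := by
  ext; simp [sigmaPart]

theorem mem_tildeFaces_iff {Γ : SComplex V} {Γs : Fin m → SComplex V}
    {F : Finset (V ⊕ Fin m)} :
    F ∈ tildeFaces Γ Γs ↔
      sigmaPart F ∈ Γ.faces ∧ ∀ j, Sum.inr j ∈ F → sigmaPart F ∈ (Γs j).faces := by
  constructor
  · rintro ⟨σ, hσ, τ, hτ, rfl⟩
    have hsigma : sigmaPart (σ.image Sum.inl ∪ τ.image Sum.inr) = σ := by ext; simp [sigmaPart]
    rw [hsigma]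
    exact ⟨hσ, fun j hj => hτ j (by simpa using hj)⟩
  · rintro ⟨hσ, hτ⟩
    refine ⟨sigmaPart F, hσ, F.preimage Sum.inr Sum.inr_injective.injOn,
      fun j hj => hτ j (mem_preimage.mp hj), ?_⟩
    ext (v | j) <;> simp [sigmaPart]

theorem matched_unique {Γs : Fin m → SComplex V} {F F₁ F₂ : Finset (V ⊕ Fin m)}
    (h₁ : Matched Γs F F₁) (h₂ : Matched Γs F F₂) : F₁ = F₂ := by
  obtain ⟨j₁, hj₁, hF₁⟩ := matched_iff.mp h₁
  obtain ⟨j₂, hj₂, hF₂⟩ := matched_iff.mp h₂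
  obtain rfl := hj₁.unique hj₂
  rcases hF₁ with ⟨hn₁, rfl⟩ | ⟨hn₁, rfl⟩ <;> rcases hF₂ with ⟨hn₂, rfl⟩ | ⟨hn₂, he⟩
  · rfl
  · exact absurd (he ▸ mem_insert_self _ _) hn₁
  · exact absurd (mem_insert_self _ _) hn₂
  · rw [← erase_insert hn₁, he, erase_insert hn₂]

theorem mem_tildeFaces_of_matched {Γ : SComplex V} {Γs : Fin m → SComplex V}
    {F F' : Finset (V ⊕ Fin m)} (hF : F ∈ tildeFaces Γ Γs) (h : Matched Γs F F') :
    F' ∈ tildeFaces Γ Γs := by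
  obtain ⟨j₀, hj₀, hF'⟩ := matched_iff.mp h
  obtain ⟨hσ, hτ⟩ := mem_tildeFaces_iff.mp hF
  rcases hF' with ⟨-, rfl⟩ | ⟨-, rfl⟩
  · refine mem_tildeFaces_iff.mpr ⟨by simpa using hσ, fun j hj => ?_⟩
    rcases mem_insert.mp hj with hj | hj
    · cases hj
      simpa using hj₀.1
    · simpa using hτ j hj
  · simp only [sigmaPart_insert_inr] at hσ hτ
    exact mem_tildeFaces_iff.mpr ⟨hσ, fun j hj => hτ j (mem_insert_of_mem hj)⟩

theorem exists_matched {Γs : Fin m → SComplex V} {F : Finset (V ⊕ Fin m)} {j : Fin m}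
    (hj : sigmaPart F ∈ (Γs j).faces) : ∃ F', Matched Γs F F' := by
  obtain ⟨j₀, hj₀⟩ : ∃ j₀, IsLeast {j | sigmaPart F ∈ (Γs j).faces} j₀ :=
    ⟨_, wellFounded_lt.min_mem _ ⟨j, hj⟩, fun _ hk => wellFounded_lt.min_le hk⟩
  by_cases hmem : Sum.inr j₀ ∈ F
  · exact ⟨_, _, hj₀, Or.inr ⟨notMem_erase _ _, (insert_erase hmem).symm⟩⟩
  · exact ⟨_, _, hj₀, Or.inl ⟨hmem, rfl⟩⟩

def MatchedUpward (Γs : Fin m → SComplex V) (F : Finset (V ⊕ Fin m)) : Prop :=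
  ∃ j₀, IsLeast {j | sigmaPart F ∈ (Γs j).faces} j₀ ∧ Sum.inr j₀ ∉ F

open Classical in
noncomputable def hasseRank (Γs : Fin m → SComplex V) (F : Finset (V ⊕ Fin m)) : ℕ :=
  2 * (#(sigmaPart F) + #F) + if MatchedUpward Γs F then 3 else 0

theorem hasseRank_insert_lt_of_isLeast {Γs : Fin m → SComplex V} {F : Finset (V ⊕ Fin m)}
    {j₀ : Fin m} (hj₀ : IsLeast {j | sigmaPart F ∈ (Γs j).faces} j₀) (hF : Sum.inr j₀ ∉ F) :
    hasseRank Γs (insert (Sum.inr j₀) F) < hasseRank Γs F := by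
  have hup : MatchedUpward Γs F := ⟨j₀, hj₀, hF⟩
  have hnot : ¬ MatchedUpward Γs (insert (Sum.inr j₀) F) := by
    rintro ⟨j₁, hj₁, hn⟩
    rw [sigmaPart_insert_inr] at hj₁
    exact hn (hj₀.unique hj₁ ▸ mem_insert_self _ _)
  simp only [hasseRank, sigmaPart_insert_inr, card_insert_of_notMem hF, if_pos hup, if_neg hnot]
  omega

theorem hasseRank_lt_insert_inl (Γs : Fin m → SComplex V) {F : Finset (V ⊕ Fin m)} {v : V}
    (hv : Sum.inl v ∉ F) : hasseRank Γs F < hasseRank Γs (insert (Sum.inl v) F) := by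
  have hσ : v ∉ sigmaPart F := by simpa [sigmaPart] using hv
  simp only [hasseRank, sigmaPart_insert_inl, card_insert_of_notMem hv,
    card_insert_of_notMem hσ]
  split_ifs <;> omega

theorem hasseRank_lt_insert_inr {Γs : Fin m → SComplex V} {F : Finset (V ⊕ Fin m)} {j : Fin m}
    (hj : Sum.inr j ∉ F) (hnl : ¬ IsLeast {i | sigmaPart F ∈ (Γs i).faces} j) :
    hasseRank Γs F < hasseRank Γs (insert (Sum.inr j) F) := by
  have hup : MatchedUpward Γs F → MatchedUpward Γs (insert (Sum.inr j) F) := by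
    rintro ⟨j₀, hj₀, hn⟩
    have hne : j₀ ≠ j := by rintro rfl; exact hnl hj₀
    refine ⟨j₀, by simpa using hj₀, ?_⟩
    simpa [hne] using hn
  simp only [hasseRank, sigmaPart_insert_inr, card_insert_of_notMem hj]
  by_cases h : MatchedUpward Γs F
  · simp only [if_pos h, if_pos (hup h)]
    omega
  · simp only [if_neg h]
    split_ifs <;> omega

theorem hasseRank_lt_of_hasseStep {Γ : SComplex V} {Γs : Fin m → SComplex V}
    {F F' : Finset (V ⊕ Fin m)} (h : HasseStep Γ Γs F F') :
    hasseRank Γs F' < hasseRank Γs F := by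
  obtain ⟨-, -, ⟨⟨w, hw, rfl⟩, hM⟩ | ⟨⟨w, hw, rfl⟩, hM⟩⟩ := h
  · obtain ⟨j₀, hj₀, ⟨hn, he⟩ | ⟨-, he⟩⟩ := matched_iff.mp hM
    · exact he ▸ hasseRank_insert_lt_of_isLeast hj₀ hn
    · exact absurd (he.symm ▸ subset_insert _ _ (mem_insert_self w F)) hw
  · rcases w with v | j
    · exact hasseRank_lt_insert_inl Γs hw
    · refine hasseRank_lt_insert_inr hw fun hj => hM ⟨j, ?_, Or.inr ⟨hw, rfl⟩⟩
      rwa [sigmaPart_insert_inr]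

theorem matching_is_complete_and_acyclic_general
    (Γ : SComplex V) (Γs : Fin m → SComplex V)
    (hcover : Γ.faces = ⋃ j, (Γs j).faces) :
    (∀ F F₁ F₂, F ∈ tildeFaces Γ Γs →
        Matched Γs F F₁ → Matched Γs F F₂ → F₁ = F₂) ∧
    (∀ F F', F ∈ tildeFaces Γ Γs → Matched Γs F F' → F' ∈ tildeFaces Γ Γs) ∧
    (∀ F ∈ tildeFaces Γ Γs, ∃ F', Matched Γs F F') ∧
    (∀ F, ¬ Relation.TransGen (HasseStep Γ Γs) F F) := by
  refine ⟨fun _ _ _ _ => matched_unique, fun _ _ => mem_tildeFaces_of_matched, ?_, ?_⟩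
  · intro F hF
    obtain ⟨j, hj⟩ := Set.mem_iUnion.mp (hcover ▸ (mem_tildeFaces_iff.mp hF).1)
    exact exists_matched hj
  · intro F hcycle
    have hrank := hcycle.lift (hasseRank Γs) (p := (· > ·)) fun _ _ => hasseRank_lt_of_hasseStep
    rw [Relation.transGen_eq_self] at hrank
    exact lt_irrefl _ hrank

/-- The matching described above is a complete acyclic matching on
the (modified) Hasse diagram of `Γ̃`: it is a genuine matching (partners are unique
and are faces of `Γ̃`), every face of `Γ̃` is matched, and the modified Hasse diagram
has no directed cycles. -/
theorem matching_is_complete_and_acyclic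
    (Γ : SComplex V) (Γs : Fin m → SComplex V)
    (hsub : ∀ j, (Γs j).faces ⊆ Γ.faces)
    (hcover : Γ.faces = ⋃ j, (Γs j).faces) :
    (∀ F F₁ F₂, F ∈ tildeFaces Γ Γs →
        Matched Γs F F₁ → Matched Γs F F₂ → F₁ = F₂) ∧
    (∀ F F', F ∈ tildeFaces Γ Γs → Matched Γs F F' → F' ∈ tildeFaces Γ Γs) ∧
    (∀ F ∈ tildeFaces Γ Γs, ∃ F', Matched Γs F F') ∧
    (∀ F, ¬ Relation.TransGen (HasseStep Γ Γs) F F) :=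
  matching_is_complete_and_acyclic_general Γ Γs hcover
end

section
/- Let Γ be a simplicial complex on V₁ = {x₁,…,x_n} and let G₁,…,G_m ⊆ V₁ be such that each V₁ \ G_j is a face of Γ and every facet of Γ has the form V₁ \ G_j. Let Δ be the complex on V₁ ∪ {y₁,…,y_m} whose faces are all σ ∪ τ with σ ∈ Γ and τ ⊆ { y_j : σ ⊆ V₁ \ G_j }, together with all subsets of V₁. Then the minimal nonfaces of Δ are exactly the pairs {x_i, y_j} with 1 ≤ j ≤ m and x_i ∈ G_j. -/
variable {V : Type*} [Fintype V] [DecidableEq V] {m : ℕ}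

/-- The face set of the complex `Δ` of Construction 3.2: all sets `σ ∪ τ` with
`σ ∈ Γ` and `τ ⊆ {y_j : σ ⊆ V₁ \ G_j}` (the new vertex `y_j` is `Sum.inr j`),
together with all subsets of `V₁`. -/
def deltaFaces (Γ : SComplex V) (G : Fin m → Finset V) :
    Set (Finset (V ⊕ Fin m)) :=
  {S | ∃ σ ∈ Γ.faces, ∃ τ : Finset (Fin m), (∀ j ∈ τ, Disjoint σ (G j)) ∧
      S = σ.image Sum.inl ∪ τ.image Sum.inr} ∪
  {S | ∃ σ : Finset V, S = σ.image Sum.inl}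

theorem minimal_nonfaces_eq_of_antichain {α : Type*} [PartialOrder α] {faces P : Set α}
    (hP : IsAntichain (· ≤ ·) P) (hfaces : ∀ S, S ∈ faces ↔ ∀ B ∈ P, ¬B ≤ S) :
    {S | S ∉ faces ∧ ∀ T < S, T ∈ faces} = P := by
  ext S
  simp only [Set.mem_ofPred_eq, hfaces, not_forall, not_not]
  constructor
  · rintro ⟨⟨B, hB, hBS⟩, hmin⟩
    obtain rfl | hlt := hBS.eq_or_lt
    · exact hB
    · exact absurd le_rfl (hmin B hlt B hB)
  · intro hS
    refine ⟨⟨S, hS, le_rfl⟩, fun T hTS B hB hBT => ?_⟩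
    have hBS := hBT.trans_lt hTS
    exact hP hB hS hBS.ne hBS.le

theorem Finset.eq_image_toLeft_union_image_toRight {α β : Type*} [DecidableEq α]
    [DecidableEq β] (S : Finset (α ⊕ β)) :
    S = S.toLeft.image Sum.inl ∪ S.toRight.image Sum.inr := by
  ext (x | y) <;> simp

theorem disjoint_toLeft_of_mem_deltaFaces {α : Type*} [DecidableEq α] {Γ : SComplex α}
    {G : Fin m → Finset α} {S : Finset (α ⊕ Fin m)} (hS : S ∈ deltaFaces Γ G) :
    ∀ j ∈ S.toRight, Disjoint S.toLeft (G j) := by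
  rcases hS with ⟨σ, -, τ, hdisj, rfl⟩ | ⟨σ, rfl⟩
  · have hleft : (σ.image Sum.inl ∪ τ.image Sum.inr).toLeft = σ := by ext; simp
    have hright : (σ.image Sum.inl ∪ τ.image Sum.inr).toRight = τ := by ext; simp
    rwa [hleft, hright]
  · intro j hj
    simp at hj

theorem mem_deltaFaces_of_disjoint_toLeft {Γ : SComplex V} {G : Fin m → Finset V}
    (hface : ∀ j, Finset.univ \ G j ∈ Γ.faces) {S : Finset (V ⊕ Fin m)}
    (hdisj : ∀ j ∈ S.toRight, Disjoint S.toLeft (G j)) : S ∈ deltaFaces Γ G := by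
  rw [S.eq_image_toLeft_union_image_toRight]
  obtain hempty | ⟨j, hj⟩ := S.toRight.eq_empty_or_nonempty
  · exact Or.inr ⟨S.toLeft, by simp [hempty]⟩
  · have hσ : S.toLeft ∈ Γ.faces :=
      Γ.down_closed (hface j) (Finset.subset_sdiff.mpr ⟨Finset.subset_univ _, hdisj j hj⟩)
    exact Or.inl ⟨S.toLeft, hσ, S.toRight, hdisj, rfl⟩

theorem mem_deltaFaces_iff {Γ : SComplex V} {G : Fin m → Finset V}
    (hface : ∀ j, Finset.univ \ G j ∈ Γ.faces) (S : Finset (V ⊕ Fin m)) :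
    S ∈ deltaFaces Γ G ↔ ∀ j, ∀ x ∈ G j, ¬{Sum.inl x, Sum.inr j} ⊆ S := by
  refine ⟨fun hS j x hx hxj => ?_, fun h => mem_deltaFaces_of_disjoint_toLeft hface ?_⟩
  · rw [Finset.insert_subset_iff, Finset.singleton_subset_iff] at hxj
    exact Finset.disjoint_left.mp (disjoint_toLeft_of_mem_deltaFaces hS j (by simpa using hxj.2))
      (by simpa using hxj.1) hx
  · intro j hj
    refine Finset.disjoint_left.mpr fun x hxS hx => h j x hx ?_
    rw [Finset.insert_subset_iff, Finset.singleton_subset_iff]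
    exact ⟨Finset.mem_toLeft.mp hxS, Finset.mem_toRight.mp hj⟩

theorem minimal_nonfaces_of_delta_general
    (Γ : SComplex V) (G : Fin m → Finset V)
    (hface : ∀ j, Finset.univ \ G j ∈ Γ.faces) :
    {S : Finset (V ⊕ Fin m) | S ∉ deltaFaces Γ G ∧
        ∀ T ⊂ S, T ∈ deltaFaces Γ G} =
      {S | ∃ j, ∃ x ∈ G j, S = {Sum.inl x, Sum.inr j}} := by
  have hsized :
      Set.Sized 2 {S : Finset (V ⊕ Fin m) | ∃ j, ∃ x ∈ G j, S = {Sum.inl x, Sum.inr j}} := by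
    rintro _ ⟨j, x, -, rfl⟩
    simp
  refine minimal_nonfaces_eq_of_antichain hsized.isAntichain fun S => ?_
  simp only [mem_deltaFaces_iff hface, Set.mem_ofPred_eq, forall_exists_index, and_imp]
  exact ⟨fun h _ j x hx hB => hB ▸ h j x hx, fun h j x hx => h _ j x hx rfl⟩

/-- If every `V₁ \ G_j` is a face of `Γ` and every facet of `Γ` is of
the form `V₁ \ G_j`, then the minimal nonfaces of `Δ` are exactly the pairs
`{x_i, y_j}` with `x_i ∈ G_j`. -/
theorem minimal_nonfaces_of_delta
    (Γ : SComplex V) (G : Fin m → Finset V)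
    (hempty : ∅ ∈ Γ.faces)
    (hface : ∀ j, Finset.univ \ G j ∈ Γ.faces)
    (hfacet : ∀ F ∈ Γ.faces, (∀ F' ∈ Γ.faces, F ⊆ F' → F' = F) →
      ∃ j, F = Finset.univ \ G j) :
    {S : Finset (V ⊕ Fin m) | S ∉ deltaFaces Γ G ∧
        ∀ T ⊂ S, T ∈ deltaFaces Γ G} =
      {S | ∃ j, ∃ x ∈ G j, S = {Sum.inl x, Sum.inr j}} :=
  minimal_nonfaces_of_delta_general Γ G hface
end

section
/- Let Δ be the Stanley–Reisner complex of a squarefree monomial ideal I in k[V], and suppose I = (J, y₁⋯y_t) minimally with t ≥ 2, where every generator of I divisible by y₂ is also divisible by y₁ (e.g. I is a polarization of an ideal (J₀, x₁^t)). Then for any subset τ ⊆ V containing {y₁,…,y_t}, the deletion del_{Δ|_τ}(y₁) is a cone over y₂; in particular del_{Δ|_τ}(y₁) has vanishing reduced homology, and hence H̃_{i+1}(Δ|_τ; ℤ) ≅ H̃_i(link_{Δ|_τ}(y₁); ℤ) for all i ≥ 0. -/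
namespace SComplex

variable {V : Type*} [DecidableEq V]

/-- The deletion of a vertex `x`: the restriction of `K` to the other vertices. -/
def del (K : SComplex V) (x : V) : SComplex V where
  faces := {F | F ∈ K.faces ∧ x ∉ F}
  down_closed := fun hF hG => ⟨K.down_closed hF.1 hG, fun hx => hF.2 (hG hx)⟩

/-- The link of a vertex `x`. -/
def link (K : SComplex V) (x : V) : SComplex V where
  faces := {F | F ∈ K.faces ∧ x ∉ F ∧ insert x F ∈ K.faces}
  down_closed := fun hF hG =>
    ⟨K.down_closed hF.1 hG, fun hx => hF.2.1 (hG hx),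
      K.down_closed hF.2.2 (Finset.insert_subset_insert _ hG)⟩

/-- The restriction `K|_τ` of `K` to a subset `τ` of the vertices. -/
def restrict (K : SComplex V) (τ : Finset V) : SComplex V where
  faces := {F | F ∈ K.faces ∧ F ⊆ τ}
  down_closed := fun hF hG => ⟨K.down_closed hF.1 hG, hG.trans hF.2⟩

/-- A complex is a cone over the vertex `y` if adjoining `y` to any face gives a face. -/
def IsConeWithApex (K : SComplex V) (y : V) : Prop :=
  ∀ F ∈ K.faces, insert y F ∈ K.faces

end SComplex

/-- The Stanley–Reisner complex of the squarefree monomial ideal whose minimal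
generators correspond to the finite sets in `Gens`. -/
def SRcomplex {V : Type*} (Gens : Finset (Finset V)) : SComplex V where
  faces := {F | ∀ g ∈ Gens, ¬ g ⊆ F}
  down_closed := fun hF hG g hg hsub => hF g hg (hsub.trans hG)

section Homology

variable {V : Type*} [LinearOrder V]

/-- Reduced `ℤ`-chains: the free abelian group on faces of cardinality `k`. -/
abbrev SComplex.Chains (K : SComplex V) (k : ℕ) : Type _ :=
  {F : Finset V // F ∈ K.faces ∧ F.card = k} →₀ ℤ

/-- The simplicial boundary map, with signs from the linear order on `V`. -/
noncomputable def SComplex.bdry (K : SComplex V) (k : ℕ) :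
    K.Chains (k + 1) →ₗ[ℤ] K.Chains k :=
  Finsupp.lsum ℤ fun F => LinearMap.toSpanSingleton ℤ (K.Chains k)
    (∑ x ∈ F.1.attach,
      ((-1 : ℤ) ^ (List.idxOf x.1 (F.1.sort (· ≤ ·)))) •
        Finsupp.single ⟨F.1.erase x.1,
          K.down_closed F.2.1 (Finset.erase_subset _ _), by
            simp [Finset.card_erase_of_mem x.2, F.2.2]⟩ 1)

/-- The `i`-th reduced simplicial homology with integer coefficients. -/
noncomputable def SComplex.reducedHomology (K : SComplex V) (i : ℕ) : Type _ :=
  LinearMap.ker (K.bdry i) ⧸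
    (LinearMap.range (K.bdry (i + 1))).comap (LinearMap.ker (K.bdry i)).subtype

noncomputable instance (K : SComplex V) (i : ℕ) : AddCommGroup (K.reducedHomology i) :=
  inferInstanceAs (AddCommGroup
    (LinearMap.ker (K.bdry i) ⧸
      (LinearMap.range (K.bdry (i + 1))).comap (LinearMap.ker (K.bdry i)).subtype))

noncomputable instance (K : SComplex V) (i : ℕ) : Module ℤ (K.reducedHomology i) :=
  inferInstanceAs (Module ℤ
    (LinearMap.ker (K.bdry i) ⧸
      (LinearMap.range (K.bdry (i + 1))).comap (LinearMap.ker (K.bdry i)).subtype))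

end Homology

/-!
Every generator containing `y₂` also contains `y₁`, so adjoining `y₂` to a face of `Δ|_τ` that
avoids `y₁` creates no generator: `del(y₁)` is a cone with apex `y₂`, and the cone operator
`F ↦ ±(F ∪ {y₂})` is a chain contraction of it.

For the shift, a chain of `K = Δ|_τ` splits into a part on `del(y₁)` and cones `y₁ * G` over faces
`G` of the link. Removing `y₁` anticommutes with the boundary and induces
`H̃_{i+1}(K) → H̃_i(link(y₁))`. Its inverse sends a link cycle `c` to `y₁ * c - h c`, where the
contraction `h` of the deletion provides a chain `h c` of `del(y₁)` with boundary `c`.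
-/

open Finset

theorem List.Pairwise.idxOf_eq_length_filter_lt {V : Type*} [LinearOrder V] {x : V} :
    ∀ {l : List V}, l.Pairwise (· < ·) → x ∈ l → l.idxOf x = (l.filter (· < x)).length
  | [], _, hx => absurd hx List.not_mem_nil
  | a :: l, hl, hx => by
    rw [List.pairwise_cons] at hl
    rcases eq_or_ne a x with rfl | hne
    · have : l.filter (· < a) = [] :=
        List.filter_eq_nil_iff.2 fun z hz => by simpa using (hl.1 z hz).le
      simp [this]
    · have hxl : x ∈ l := (List.mem_cons.1 hx).resolve_left hne.symm
      rw [List.idxOf_cons_ne _ hne, List.filter_cons_of_pos (by simpa using hl.1 x hxl),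
        List.length_cons, hl.2.idxOf_eq_length_filter_lt hxl]

theorem Finset.idxOf_sort_eq_card_filter_lt {V : Type*} [LinearOrder V] {F : Finset V} {x : V}
    (hx : x ∈ F) : (F.sort (· ≤ ·)).idxOf x = #(F.filter (· < x)) := by
  rw [F.sortedLT_sort.pairwise.idxOf_eq_length_filter_lt (F.mem_sort _ |>.2 hx),
    ← Multiset.coe_card, ← Multiset.filter_coe, Finset.sort_eq]
  rfl

namespace SComplex

variable {V : Type*} {K A B : SComplex V} {k : ℕ} {F : Finset V}

open Classical in
/-- Zero unless `F` is a face with `k` vertices; this makes `cone` and `contract` below vanish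
where adjoining or removing the vertex does not give such a face. -/
noncomputable def faceChain (K : SComplex V) (k : ℕ) (F : Finset V) : K.Chains k :=
  if h : F ∈ K.faces ∧ #F = k then Finsupp.single ⟨F, h⟩ 1 else 0

theorem faceChain_of_mem (hF : F ∈ K.faces ∧ #F = k) :
    K.faceChain k F = Finsupp.single ⟨F, hF⟩ 1 :=
  dif_pos hF

theorem faceChain_of_notMem (hF : F ∉ K.faces) : K.faceChain k F = 0 :=
  dif_neg fun h => hF h.1

theorem faceChain_of_card_ne (hF : #F ≠ k) : K.faceChain k F = 0 :=
  dif_neg fun h => hF h.2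

theorem chains_ext {K K' : SComplex V} {k k' : ℕ} {f g : K.Chains k →ₗ[ℤ] K'.Chains k'}
    (h : ∀ F (_ : F ∈ K.faces ∧ #F = k), f (K.faceChain k F) = g (K.faceChain k F)) : f = g :=
  Finsupp.lhom_ext' fun F => LinearMap.ext_ring <| by
    simpa only [LinearMap.comp_apply, Finsupp.lsingle_apply, faceChain_of_mem F.2] using h F.1 F.2

theorem linearCombination_faceChain {K K' : SComplex V} {k k' : ℕ}
    (v : {F : Finset V // F ∈ K.faces ∧ #F = k} → K'.Chains k') {F : Finset V}
    (hF : F ∈ K.faces ∧ #F = k) : Finsupp.linearCombination ℤ v (K.faceChain k F) = v ⟨F, hF⟩ := by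
  rw [faceChain_of_mem hF, Finsupp.linearCombination_single]
  exact one_smul ℤ _

theorem del_faces_subset (K : SComplex V) (y : V) : (K.del y).faces ⊆ K.faces :=
  fun _ hF => hF.1

theorem faceChain_del_of_mem {y : V} (hy : y ∈ F) : (K.del y).faceChain k F = 0 :=
  faceChain_of_notMem fun hF => hF.2 hy

/-- Inclusion of chains when `A ⊆ B`, projection when `B ⊆ A`. -/
noncomputable def restrictChains (A B : SComplex V) (k : ℕ) : A.Chains k →ₗ[ℤ] B.Chains k :=
  Finsupp.linearCombination ℤ fun F => B.faceChain k F.1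

theorem restrictChains_faceChain (hF : F ∈ A.faces ∧ #F = k) :
    restrictChains A B k (A.faceChain k F) = B.faceChain k F :=
  linearCombination_faceChain _ hF

theorem restrictChains_self (k : ℕ) : restrictChains A A k = LinearMap.id :=
  chains_ext fun _ hF => restrictChains_faceChain hF

theorem restrictChains_comp_restrictChains {C : SComplex V} (hAB : A.faces ⊆ B.faces) (k : ℕ) :
    (restrictChains B C k).comp (restrictChains A B k) = restrictChains A C k :=
  chains_ext fun _ hF => by
    rw [LinearMap.comp_apply, restrictChains_faceChain hF, restrictChains_faceChain hF,
      restrictChains_faceChain ⟨hAB hF.1, hF.2⟩]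

section DecidableEq

variable [DecidableEq V]

theorem faces_card_erase (hF : F ∈ K.faces ∧ #F = k + 1) {x : V} (hx : x ∈ F) :
    F.erase x ∈ K.faces ∧ #(F.erase x) = k :=
  ⟨K.down_closed hF.1 (erase_subset x F), by rw [card_erase_of_mem hx, hF.2, Nat.add_sub_cancel]⟩

theorem link_faces_subset_del (K : SComplex V) (y : V) : (K.link y).faces ⊆ (K.del y).faces :=
  fun _ hF => ⟨hF.1, hF.2.1⟩

theorem link_faces_card_erase {y : V} (hF : F ∈ K.faces ∧ #F = k + 1) (hy : y ∈ F) :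
    F.erase y ∈ (K.link y).faces ∧ #(F.erase y) = k :=
  ⟨⟨(faces_card_erase hF hy).1, notMem_erase y F, by rw [insert_erase hy]; exact hF.1⟩,
    (faces_card_erase hF hy).2⟩

end DecidableEq

variable [LinearOrder V]

def faceSign (F : Finset V) (x : V) : ℤ := (-1) ^ #(F.filter (· < x))

theorem faceSign_mul_self (F : Finset V) (x : V) : faceSign F x * faceSign F x = 1 := by
  rw [faceSign, ← pow_add, ← two_mul, pow_mul, neg_one_sq, one_pow]

theorem faceSign_eq_of_mem {y : V} (hy : y ∈ F) (x : V) :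
    faceSign F x = (if y < x then -1 else 1) * faceSign (F.erase y) x := by
  have hcard : #(F.filter (· < x)) = #((F.erase y).filter (· < x)) + if y < x then 1 else 0 := by
    rw [filter_erase]
    split_ifs with h
    · exact (card_erase_add_one (mem_filter.2 ⟨hy, h⟩)).symm
    · rw [erase_eq_of_notMem (by simp [h]), add_zero]
  rw [faceSign, faceSign, hcard, pow_add]
  split_ifs <;> ring

theorem faceSign_mul_faceSign_erase {x y : V} (hx : x ∈ F) (hy : y ∈ F) (hxy : x ≠ y) :
    faceSign F x * faceSign (F.erase x) y = -(faceSign F y * faceSign (F.erase y) x) := by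
  rw [faceSign_eq_of_mem hy x, faceSign_eq_of_mem hx y]
  rcases hxy.lt_or_gt with h | h
  · rw [if_neg h.not_gt, if_pos h]; ring
  · rw [if_pos h, if_neg h.not_gt]; ring

theorem faceSign_insert_mul {x y : V} (hy : y ∉ F) (hx : x ∈ F) :
    faceSign (insert y F) y * faceSign (insert y F) x
      = -(faceSign F x * faceSign (insert y (F.erase x)) y) := by
  have hxy : x ≠ y := ne_of_mem_of_not_mem hx hy
  rw [faceSign_eq_of_mem (mem_insert_of_mem hx) y, faceSign_eq_of_mem (mem_insert_self y F) x,
    erase_insert hy, erase_insert_of_ne hxy.symm]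
  rcases hxy.lt_or_gt with h | h
  · rw [if_pos h, if_neg h.not_gt]; ring
  · rw [if_neg h.not_gt, if_pos h]; ring

theorem bdry_faceChain (K : SComplex V) (hF : F ∈ K.faces ∧ #F = k + 1) :
    K.bdry k (K.faceChain (k + 1) F) = ∑ x ∈ F, faceSign F x • K.faceChain k (F.erase x) := by
  rw [bdry, faceChain_of_mem hF, Finsupp.lsum_single, LinearMap.toSpanSingleton_apply, one_smul,
    ← sum_attach F]
  refine sum_congr rfl fun x _ => ?_
  rw [idxOf_sort_eq_card_filter_lt x.2, faceChain_of_mem (faces_card_erase hF x.2)]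
  rfl

noncomputable def cone (A B : SComplex V) (y : V) (k : ℕ) : A.Chains k →ₗ[ℤ] B.Chains (k + 1) :=
  Finsupp.linearCombination ℤ fun F =>
    faceSign (insert y F.1) y • B.faceChain (k + 1) (insert y F.1)

noncomputable def contract (K : SComplex V) (y : V) (k : ℕ) :
    K.Chains (k + 1) →ₗ[ℤ] (K.link y).Chains k :=
  Finsupp.linearCombination ℤ fun F => faceSign F.1 y • (K.link y).faceChain k (F.1.erase y)

theorem cone_faceChain (y : V) (hF : F ∈ A.faces ∧ #F = k) :
    cone A B y k (A.faceChain k F) = faceSign (insert y F) y • B.faceChain (k + 1) (insert y F) :=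
  linearCombination_faceChain _ hF

theorem contract_faceChain (y : V) (hF : F ∈ A.faces ∧ #F = k + 1) :
    contract A y k (A.faceChain (k + 1) F) = faceSign F y • (A.link y).faceChain k (F.erase y) :=
  linearCombination_faceChain _ hF

theorem bdry_comp_restrictChains (hAB : A.faces ⊆ B.faces) (k : ℕ) :
    (B.bdry k).comp (restrictChains A B (k + 1)) = (restrictChains A B k).comp (A.bdry k) :=
  chains_ext fun F hF => by
    rw [LinearMap.comp_apply, LinearMap.comp_apply, restrictChains_faceChain hF,
      bdry_faceChain B ⟨hAB hF.1, hF.2⟩, bdry_faceChain A hF, map_sum]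
    refine sum_congr rfl fun x hx => ?_
    rw [map_zsmul, restrictChains_faceChain (faces_card_erase hF hx)]

theorem bdry_comp_cone_add_cone_comp_bdry {y : V} (hAB : ∀ F ∈ A.faces, insert y F ∈ B.faces)
    (k : ℕ) :
    (B.bdry (k + 1)).comp (cone A B y (k + 1)) + (cone A B y k).comp (A.bdry k)
      = restrictChains A B (k + 1) := by
  refine chains_ext fun F hF => ?_
  rw [LinearMap.add_apply, LinearMap.comp_apply, LinearMap.comp_apply, cone_faceChain y hF,
    restrictChains_faceChain hF, bdry_faceChain A hF, map_sum]
  have hcone : ∀ x ∈ F, cone A B y k (faceSign F x • A.faceChain k (F.erase x))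
      = (faceSign F x * faceSign (insert y (F.erase x)) y) •
          B.faceChain (k + 1) (insert y (F.erase x)) := fun x hx => by
    rw [map_zsmul, cone_faceChain y (faces_card_erase hF hx), smul_smul]
  rw [sum_congr rfl hcone]
  by_cases hy : y ∈ F
  · -- only the face `F.erase y` contributes
    rw [insert_eq_of_mem hy, faceChain_of_card_ne (by omega), smul_zero, map_zero, zero_add,
      sum_eq_single_of_mem y hy, insert_erase hy, faceSign_mul_self, one_smul]
    intro x _ hxy
    rw [faceChain_of_card_ne, smul_zero]
    rw [insert_eq_of_mem (mem_erase.2 ⟨Ne.symm hxy, hy⟩), card_erase_of_mem ‹_›, hF.2]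
    omega
  · have hG : insert y F ∈ B.faces ∧ #(insert y F) = k + 1 + 1 :=
      ⟨hAB F hF.1, by rw [card_insert_of_notMem hy, hF.2]⟩
    rw [map_zsmul, bdry_faceChain B hG, sum_insert hy, erase_insert hy, smul_add, smul_smul,
      faceSign_mul_self, one_smul, add_assoc, add_eq_left, smul_sum, ← sum_add_distrib]
    refine sum_eq_zero fun x hx => ?_
    rw [erase_insert_of_ne (ne_of_mem_of_not_mem hx hy).symm, smul_smul, faceSign_insert_mul hy hx,
      neg_smul, neg_add_cancel]

section Link

variable (K) (y : V)

theorem contract_comp_bdry_add_bdry_comp_contract (k : ℕ) :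
    (contract K y k).comp (K.bdry (k + 1)) + ((K.link y).bdry k).comp (contract K y (k + 1))
      = 0 := by
  refine chains_ext fun F hF => ?_
  rw [LinearMap.add_apply, LinearMap.comp_apply, LinearMap.comp_apply, LinearMap.zero_apply,
    bdry_faceChain K hF, contract_faceChain y hF, map_sum, map_zsmul]
  have hcontract : ∀ x ∈ F, contract K y k (faceSign F x • K.faceChain (k + 1) (F.erase x))
      = (faceSign F x * faceSign (F.erase x) y) • (K.link y).faceChain k ((F.erase x).erase y) :=
    fun x hx => by rw [map_zsmul, contract_faceChain y (faces_card_erase hF hx), smul_smul]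
  rw [sum_congr rfl hcontract]
  by_cases hy : y ∈ F
  · have hFy := link_faces_card_erase hF hy
    rw [bdry_faceChain _ hFy, ← add_sum_erase F _ hy, erase_eq_of_notMem (notMem_erase y F),
      faceChain_of_card_ne (by omega), smul_zero, zero_add, smul_sum, ← sum_add_distrib]
    refine sum_eq_zero fun x hx => ?_
    rw [smul_smul, erase_right_comm,
      faceSign_mul_faceSign_erase (mem_of_mem_erase hx) hy (ne_of_mem_erase hx), neg_smul,
      neg_add_cancel]
  · rw [erase_eq_of_notMem hy, faceChain_of_card_ne (by omega), map_zero, smul_zero, add_zero]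
    refine sum_eq_zero fun x hx => ?_
    rw [erase_eq_of_notMem fun h => hy (mem_of_mem_erase h), faceChain_of_card_ne, smul_zero]
    rw [(faces_card_erase hF hx).2]
    omega

theorem bdry_contract (k : ℕ) (z : K.Chains (k + 1 + 1)) :
    (K.link y).bdry k (contract K y (k + 1) z) = -contract K y k (K.bdry (k + 1) z) :=
  eq_neg_of_add_eq_zero_right <|
    LinearMap.congr_fun (contract_comp_bdry_add_bdry_comp_contract K y k) z

theorem contract_comp_cone (k : ℕ) :
    (contract K y k).comp (cone (K.link y) K y k) = LinearMap.id :=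
  chains_ext fun F hF => by
    have hyF : y ∉ F := hF.1.2.1
    rw [LinearMap.comp_apply, cone_faceChain y hF,
      map_zsmul, contract_faceChain y ⟨hF.1.2.2, by rw [card_insert_of_notMem hyF, hF.2]⟩,
      erase_insert hyF, smul_smul, faceSign_mul_self, one_smul, LinearMap.id_apply]

theorem contract_comp_restrictChains_del (k : ℕ) :
    (contract K y k).comp (restrictChains (K.del y) K (k + 1)) = 0 :=
  chains_ext fun F hF => by
    rw [LinearMap.comp_apply, restrictChains_faceChain hF,
      contract_faceChain (A := K) y ⟨hF.1.1, hF.2⟩, erase_eq_of_notMem hF.1.2,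
      faceChain_of_card_ne (by omega), smul_zero, LinearMap.zero_apply]

theorem restrictChains_del_comp_add_cone_comp_contract (k : ℕ) :
    (restrictChains (K.del y) K (k + 1)).comp (restrictChains K (K.del y) (k + 1))
      + (cone (K.link y) K y k).comp (contract K y k) = LinearMap.id := by
  refine chains_ext fun F hF => ?_
  rw [LinearMap.add_apply, LinearMap.comp_apply, LinearMap.comp_apply, LinearMap.id_apply,
    restrictChains_faceChain hF, contract_faceChain y hF]
  by_cases hy : y ∈ F
  · rw [faceChain_del_of_mem hy, map_zero, zero_add, map_zsmul,
      cone_faceChain y (link_faces_card_erase hF hy), insert_erase hy, smul_smul,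
      faceSign_mul_self, one_smul]
  · rw [restrictChains_faceChain (A := K.del y) ⟨⟨hF.1, hy⟩, hF.2⟩, erase_eq_of_notMem hy,
      faceChain_of_card_ne (K := K.link y) (by omega : #F ≠ k), smul_zero, map_zero, add_zero]

theorem restrictChains_del_comp_bdry (k : ℕ) :
    (restrictChains K (K.del y) k).comp (K.bdry k)
      = ((K.del y).bdry k).comp (restrictChains K (K.del y) (k + 1))
        + (restrictChains (K.link y) (K.del y) k).comp (contract K y k) := by
  refine chains_ext fun F hF => ?_
  rw [LinearMap.add_apply, LinearMap.comp_apply, LinearMap.comp_apply, LinearMap.comp_apply,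
    bdry_faceChain K hF, restrictChains_faceChain hF, contract_faceChain y hF, map_sum]
  by_cases hy : y ∈ F
  · rw [faceChain_del_of_mem hy, map_zero, zero_add, map_zsmul,
      restrictChains_faceChain (link_faces_card_erase hF hy), sum_eq_single_of_mem y hy,
      map_zsmul, restrictChains_faceChain (faces_card_erase hF hy)]
    intro x hx hxy
    rw [map_zsmul, restrictChains_faceChain (faces_card_erase hF hx),
      faceChain_del_of_mem (mem_erase.2 ⟨Ne.symm hxy, hy⟩), smul_zero]
  · rw [erase_eq_of_notMem hy, faceChain_of_card_ne (K := K.link y) (by omega : #F ≠ k),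
      smul_zero, map_zero, add_zero, bdry_faceChain (K.del y) ⟨⟨hF.1, hy⟩, hF.2⟩]
    refine sum_congr rfl fun x hx => ?_
    rw [map_zsmul, restrictChains_faceChain (faces_card_erase hF hx)]

end Link

def IsChainContraction (K : SComplex V) (h : ∀ k, K.Chains k →ₗ[ℤ] K.Chains (k + 1)) : Prop :=
  ∀ k, (K.bdry (k + 1)).comp (h (k + 1)) + (h k).comp (K.bdry k) = LinearMap.id

theorem IsConeWithApex.isChainContraction_cone {y : V} (hK : K.IsConeWithApex y) :
    IsChainContraction K (cone K K y) := fun k => by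
  rw [bdry_comp_cone_add_cone_comp_bdry hK, restrictChains_self]

theorem IsChainContraction.subsingleton_reducedHomology
    {h : ∀ k, K.Chains k →ₗ[ℤ] K.Chains (k + 1)} (hh : IsChainContraction K h) (i : ℕ) :
    Subsingleton (K.reducedHomology i) := by
  suffices (LinearMap.range (K.bdry (i + 1))).comap (LinearMap.ker (K.bdry i)).subtype = ⊤ from
    Submodule.Quotient.subsingleton_iff.2 this
  refine Submodule.eq_top_iff'.2 fun z => ?_
  have hz := LinearMap.congr_fun (hh i) z
  rw [LinearMap.add_apply, LinearMap.comp_apply, LinearMap.comp_apply, LinearMap.mem_ker.1 z.2,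
    map_zero, add_zero] at hz
  exact ⟨_, hz⟩

section HomologyMap

variable {K' : SComplex V} {i j : ℕ} (f : K.Chains (i + 1) →ₗ[ℤ] K'.Chains (j + 1))

noncomputable def reducedHomologyMap (hcycle : ∀ c, K.bdry i c = 0 → K'.bdry j (f c) = 0)
    (hbdry : ∀ w, f (K.bdry (i + 1) w) ∈ LinearMap.range (K'.bdry (j + 1))) :
    K.reducedHomology i →ₗ[ℤ] K'.reducedHomology j :=
  Submodule.mapQ _ _ (f.restrict fun c hc => hcycle c hc) fun z ⟨w, hw⟩ => by
    change f z ∈ LinearMap.range (K'.bdry (j + 1))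
    rw [← Submodule.subtype_apply, ← hw]
    exact hbdry w

theorem reducedHomologyMap_comp_eq_id (g : K'.Chains (j + 1) →ₗ[ℤ] K.Chains (i + 1))
    {hf hf' hg hg'} (hgf : ∀ c, K.bdry i c = 0 → g (f c) - c ∈ LinearMap.range (K.bdry (i + 1))) :
    (reducedHomologyMap g hg hg').comp (reducedHomologyMap f hf hf') = LinearMap.id := by
  refine LinearMap.ext fun x => ?_
  obtain ⟨c, rfl⟩ := Submodule.Quotient.mk_surjective _ x
  exact (Submodule.Quotient.eq _).2 (hgf c c.2)

end HomologyMap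

section LinkShift

variable (K) (y : V)

/-- Cone a link chain over `y`, then cancel its boundary inside the deletion using `h`. -/
noncomputable def linkLift (h : ∀ k, (K.del y).Chains k →ₗ[ℤ] (K.del y).Chains (k + 1))
    (k : ℕ) : (K.link y).Chains k →ₗ[ℤ] K.Chains (k + 1) :=
  cone (K.link y) K y k
    - (restrictChains (K.del y) K (k + 1)).comp ((h k).comp (restrictChains (K.link y) (K.del y) k))

variable {K y} {h : ∀ k, (K.del y).Chains k →ₗ[ℤ] (K.del y).Chains (k + 1)}

theorem contract_comp_linkLift (k : ℕ) :
    (contract K y k).comp (linkLift K y h k) = LinearMap.id := by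
  rw [linkLift, LinearMap.comp_sub, contract_comp_cone, ← LinearMap.comp_assoc,
    contract_comp_restrictChains_del, LinearMap.zero_comp, sub_zero]

theorem bdry_linkLift (hh : IsChainContraction (K.del y) h) (k : ℕ)
    (c : (K.link y).Chains (k + 1)) :
    K.bdry (k + 1) (linkLift K y h (k + 1) c) = -linkLift K y h k ((K.link y).bdry k c) := by
  have e1 := LinearMap.congr_fun (bdry_comp_cone_add_cone_comp_bdry (A := K.link y) (B := K)
    (y := y) (fun _ hF => hF.2.2) k) c
  have e2 := LinearMap.congr_fun (bdry_comp_restrictChains (del_faces_subset K y) (k + 1))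
    (h (k + 1) (restrictChains (K.link y) (K.del y) (k + 1) c))
  have e3 := congrArg (restrictChains (K.del y) K (k + 1))
    (LinearMap.congr_fun (hh k) (restrictChains (K.link y) (K.del y) (k + 1) c))
  have e4 := LinearMap.congr_fun (bdry_comp_restrictChains (link_faces_subset_del K y) k) c
  have e5 := LinearMap.congr_fun
    (restrictChains_comp_restrictChains (C := K) (link_faces_subset_del K y) (k + 1)) c
  simp only [LinearMap.add_apply, LinearMap.comp_apply, LinearMap.id_apply, map_add]
    at e1 e2 e3 e4 e5
  rw [e4] at e3
  -- `∂(y * c)` and `∂(h c)` both equal `c` up to terms in `∂c`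
  simp only [linkLift, LinearMap.sub_apply, LinearMap.comp_apply, map_sub]
  linear_combination (norm := module) e1 - e2 - e3 - e5

theorem sub_linkLift_contract (hh : IsChainContraction (K.del y) h) (k : ℕ)
    (z : K.Chains (k + 1)) (hz : K.bdry k z = 0) :
    z - linkLift K y h k (contract K y k z)
      = K.bdry (k + 1) (restrictChains (K.del y) K (k + 2)
          (h (k + 1) (restrictChains K (K.del y) (k + 1) z))) := by
  have f1 := LinearMap.congr_fun (restrictChains_del_comp_add_cone_comp_contract K y k) z
  have f2 := LinearMap.congr_fun (restrictChains_del_comp_bdry K y k) z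
  have f3 := congrArg (restrictChains (K.del y) K (k + 1))
    (LinearMap.congr_fun (hh k) (restrictChains K (K.del y) (k + 1) z))
  have f4 := LinearMap.congr_fun (bdry_comp_restrictChains (del_faces_subset K y) (k + 1))
    (h (k + 1) (restrictChains K (K.del y) (k + 1) z))
  simp only [LinearMap.add_apply, LinearMap.comp_apply, LinearMap.id_apply, map_add, hz,
    map_zero] at f1 f2 f3 f4
  -- `z - y * contract z` is the part of `z` on the deletion, where `contract z` is minus the
  -- boundary of that part because `z` is a cycle
  simp only [linkLift, LinearMap.sub_apply, LinearMap.comp_apply,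
    eq_neg_of_add_eq_zero_right f2.symm, map_neg]
  linear_combination (norm := module) -f1 - f3 - f4

noncomputable def reducedHomologyEquivLink (hh : IsChainContraction (K.del y) h) (i : ℕ) :
    K.reducedHomology (i + 1) ≃ₗ[ℤ] (K.link y).reducedHomology i :=
  LinearEquiv.ofLinearMap
    (reducedHomologyMap (contract K y (i + 1))
      (fun z hz => by rw [bdry_contract, hz, map_zero, neg_zero])
      (fun w => ⟨-contract K y (i + 2) w, by rw [map_neg, bdry_contract, neg_neg]⟩))
    (reducedHomologyMap (linkLift K y h (i + 1))
      (fun c hc => by rw [bdry_linkLift hh, hc, map_zero, neg_zero])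
      (fun w => ⟨-linkLift K y h (i + 2) w, by rw [map_neg, bdry_linkLift hh, neg_neg]⟩))
    (reducedHomologyMap_comp_eq_id _ _ fun c _ => by
      rw [← LinearMap.comp_apply, contract_comp_linkLift, LinearMap.id_apply, sub_self]
      exact zero_mem _)
    (reducedHomologyMap_comp_eq_id _ _ fun z hz =>
      ⟨-_, by rw [map_neg, ← sub_linkLift_contract hh (i + 1) z hz, neg_sub]⟩)

end LinkShift

end SComplex

theorem SRcomplex.isConeWithApex_del_restrict {V : Type*} [DecidableEq V]
    {Gens : Finset (Finset V)} {y₁ y₂ : V} {τ : Finset V} (h12 : y₁ ≠ y₂)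
    (hdiv : ∀ g ∈ Gens, y₂ ∈ g → y₁ ∈ g) (hy₂ : y₂ ∈ τ) :
    (((SRcomplex Gens).restrict τ).del y₁).IsConeWithApex y₂ := by
  rintro F ⟨⟨hF, hFτ⟩, hy₁F⟩
  have hy₁ : y₁ ∉ insert y₂ F := by simp [h12, hy₁F]
  refine ⟨⟨fun g hg hgF => ?_, insert_subset hy₂ hFτ⟩, hy₁⟩
  by_cases hy₂g : y₂ ∈ g
  · exact hy₁ (hgF (hdiv g hg hy₂g))
  · exact hF g hg ((subset_insert_iff_of_notMem hy₂g).1 hgF)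

theorem del_is_cone_and_homology_shift_general {V : Type*} [LinearOrder V]
    (Gens : Finset (Finset V)) (Y : Finset V) (y₁ y₂ : V)
    (h12 : y₁ ≠ y₂) (hy₂ : y₂ ∈ Y)
    (hdiv : ∀ g ∈ Gens, y₂ ∈ g → y₁ ∈ g)
    (τ : Finset V) (hτ : Y ⊆ τ) :
    (((SRcomplex Gens).restrict τ).del y₁).IsConeWithApex y₂ ∧
    (∀ i : ℕ, Subsingleton ((((SRcomplex Gens).restrict τ).del y₁).reducedHomology i)) ∧
    (∀ i : ℕ, Nonempty (((SRcomplex Gens).restrict τ).reducedHomology (i + 1) ≃ₗ[ℤ]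
      (((SRcomplex Gens).restrict τ).link y₁).reducedHomology i)) := by
  have hcone := SRcomplex.isConeWithApex_del_restrict h12 hdiv (hτ hy₂)
  have hcontr := hcone.isChainContraction_cone
  exact ⟨hcone, hcontr.subsingleton_reducedHomology,
    fun i => ⟨SComplex.reducedHomologyEquivLink hcontr i⟩⟩

/-- Let `Δ` be the Stanley–Reisner complex of a squarefree monomial
ideal `I` with minimal (squarefree) generators `Gens`, containing the generator
`Y = {y₁, …, y_t}` with `t ≥ 2`, and suppose every generator containing `y₂` also
contains `y₁`. Then for every `τ ⊇ Y`, the deletion of `y₁` from `Δ|_τ` is a cone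
over `y₂`; in particular it has vanishing reduced homology, and hence
`H̃_{i+1}(Δ|_τ; ℤ) ≅ H̃_i(link_{Δ|_τ}(y₁); ℤ)` for all `i ≥ 0`. -/
theorem del_is_cone_and_homology_shift {V : Type*} [LinearOrder V]
    (Gens : Finset (Finset V)) (Y : Finset V) (y₁ y₂ : V)
    (h12 : y₁ ≠ y₂) (hy₁ : y₁ ∈ Y) (hy₂ : y₂ ∈ Y) (ht : 2 ≤ Y.card)
    (hYgen : Y ∈ Gens)
    (hmin : ∀ g ∈ Gens, ∀ g' ∈ Gens, g ⊆ g' → g = g')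
    (hdiv : ∀ g ∈ Gens, y₂ ∈ g → y₁ ∈ g)
    (τ : Finset V) (hτ : Y ⊆ τ) :
    (((SRcomplex Gens).restrict τ).del y₁).IsConeWithApex y₂ ∧
    (∀ i : ℕ, Subsingleton ((((SRcomplex Gens).restrict τ).del y₁).reducedHomology i)) ∧
    (∀ i : ℕ, Nonempty (((SRcomplex Gens).restrict τ).reducedHomology (i + 1) ≃ₗ[ℤ]
      (((SRcomplex Gens).restrict τ).link y₁).reducedHomology i)) :=
  del_is_cone_and_homology_shift_general Gens Y y₁ y₂ h12 hy₂ hdiv τ hτ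
end

section
/- A squarefree monomial ideal I in k[V] of height c is the polarization of a primary monomial ideal if and only if there is a partition V = ⨆_{i=1}^c {x_{i,1},…,x_{i,n_i}} such that for every i and every minimal generator f of I, if x_{i,j} divides f for some j then x_{i,k} divides f for all k ≤ j. -/
variable {V : Type*} [Fintype V] [DecidableEq V]

/-- The polarization of the monomial with exponent vector `g : Fin c → ℕ`,
as a subset of the polarized variables: `{x_{i,j} : j < g i}`. -/
def polSupp {c : ℕ} (n : Fin c → ℕ) (g : Fin c → ℕ) :
    Finset ((i : Fin c) × Fin (n i)) :=
  Finset.univ.filter fun v => (v.2 : ℕ) < g v.1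

/-- `gens` (the minimal generators of a squarefree monomial ideal on the vertex
set `V`) is the polarization of a primary monomial ideal: there is an
identification of `V` with a set of polarized variables `x_{i,j}` (`1 ≤ i ≤ c'`,
`1 ≤ j ≤ n_i`) under which `gens` is the polarization of the set `A` of minimal
generators of a monomial ideal in `c'` variables that is primary to the maximal
ideal (each variable admits a pure power among the generators). -/
def IsPolarizationOfPrimary (gens : Finset (Finset V)) : Prop :=
  ∃ (c' : ℕ) (n : Fin c' → ℕ) (e : V ≃ ((i : Fin c') × Fin (n i)))
    (A : Finset (Fin c' → ℕ)),
      (∀ g ∈ A, ∀ i, g i ≤ n i) ∧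
      (∀ g ∈ A, g ≠ 0) ∧
      (∀ g ∈ A, ∀ g' ∈ A, g ≤ g' → g = g') ∧
      (∀ i, ∃ g ∈ A, (∀ j, j ≠ i → g j = 0) ∧ g i ≠ 0) ∧
      gens = A.image fun g => (polSupp n g).image e.symm

/-!
A staircase set `f` is the polarization of its exponent vector `i ↦ #{j | x_{i,j} ∈ f}`, and
polarization is monotone, so the staircase condition is exactly what makes `gens` the
polarization of the monomial ideal minimally generated by these vectors. The height matches the
number of blocks with the number of variables and produces the pure powers: the first variables
`x_{i,1}` of the blocks meet every staircase set, so the height is at most the number of blocks;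
a pure power of `x_i` polarizes into block `i`, so a vertex cover meets every block; and if no
generator lay inside block `i`, the first variables of the other blocks would be a vertex cover
of size `c - 1`.
-/

open Finset

lemma Fin.mem_iff_lt_card_of_isLowerSet {m : ℕ} {S : Finset (Fin m)}
    (hS : IsLowerSet (S : Set (Fin m))) (j : Fin m) : j ∈ S ↔ (j : ℕ) < #S := by
  constructor
  · intro hj
    have := card_le_card fun k (hk : k ∈ Iic j) => hS (mem_Iic.mp hk) hj
    rw [Fin.card_Iic] at this
    omega
  · intro hj
    by_contra hjS
    have := card_le_card fun k (hk : k ∈ S) => mem_Iio.mpr <|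
      lt_of_not_ge fun hjk => hjS (hS hjk hk)
    rw [Fin.card_Iio] at this
    omega

namespace Polarization

variable {α : Type*} {c : ℕ} {n : Fin c → ℕ} (e : α ≃ (i : Fin c) × Fin (n i))

def IsStaircase (s : Finset α) : Prop :=
  ∀ (i : Fin c) (j k : Fin (n i)), k ≤ j → e.symm ⟨i, j⟩ ∈ s → e.symm ⟨i, k⟩ ∈ s

variable {e} in
lemma card_le_card_of_forall_exists_fst {C : Finset α} (hC : ∀ i, ∃ v ∈ C, (e v).1 = i) :
    c ≤ #C := by
  simpa using card_le_card_of_surjOn (t := univ) (fun v => (e v).1)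
    fun i _ => by simpa using hC i

variable [DecidableEq α]

def polarize (g : Fin c → ℕ) : Finset α := (polSupp n g).image e.symm

def depolarize (s : Finset α) : Fin c → ℕ :=
  fun i => #{j : Fin (n i) | e.symm ⟨i, j⟩ ∈ s}

def firstVars (I : Finset (Fin c)) : Finset α :=
  ({x : (i : Fin c) × Fin (n i) | x.1 ∈ I ∧ (x.2 : ℕ) = 0} : Finset _).image e.symm

variable {e}

lemma symm_mem_polarize {g : Fin c → ℕ} {x : (i : Fin c) × Fin (n i)} :
    e.symm x ∈ polarize e g ↔ (x.2 : ℕ) < g x.1 := by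
  simp [polarize, polSupp]

lemma mem_polarize {g : Fin c → ℕ} {v : α} :
    v ∈ polarize e g ↔ ((e v).2 : ℕ) < g (e v).1 := by
  rw [← symm_mem_polarize (e := e), Equiv.symm_apply_apply]

lemma polarize_mono {g g' : Fin c → ℕ} (h : g ≤ g') : polarize e g ⊆ polarize e g' :=
  fun _ hv => mem_polarize.2 <| (mem_polarize.1 hv).trans_le (h _)

lemma isStaircase_polarize (g : Fin c → ℕ) : IsStaircase e (polarize e g) := by
  intro i j k hkj hj
  rw [symm_mem_polarize] at hj ⊢
  exact lt_of_le_of_lt hkj hj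

lemma polarize_nonempty {g : Fin c → ℕ} (hgn : ∀ i, g i ≤ n i) (hg : g ≠ 0) :
    (polarize e g).Nonempty := by
  obtain ⟨i, hi⟩ := Function.ne_iff.1 hg
  have hi : 0 < g i := Nat.pos_of_ne_zero hi
  exact ⟨e.symm ⟨i, ⟨0, hi.trans_le (hgn i)⟩⟩, symm_mem_polarize.2 hi⟩

lemma IsStaircase.mem_iff_lt_depolarize {s : Finset α} (hs : IsStaircase e s) (v : α) :
    v ∈ s ↔ ((e v).2 : ℕ) < depolarize e s (e v).1 := by
  rw [depolarize, ← Fin.mem_iff_lt_card_of_isLowerSet]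
  · simp
  · intro j k hkj hj
    simp only [coe_filter, mem_univ, true_and, Set.mem_ofPred_eq] at hj ⊢
    exact hs _ _ _ hkj hj

lemma IsStaircase.polarize_depolarize {s : Finset α} (hs : IsStaircase e s) :
    polarize e (depolarize e s) = s := by
  ext v
  rw [mem_polarize, hs.mem_iff_lt_depolarize]

lemma depolarize_le (s : Finset α) (i : Fin c) : depolarize e s i ≤ n i :=
  (card_filter_le _ _).trans (by simp)

lemma depolarize_eq_zero_iff {s : Finset α} {i : Fin c} :
    depolarize e s i = 0 ↔ ∀ v ∈ s, (e v).1 ≠ i := by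
  simp only [depolarize, card_eq_zero, filter_eq_empty_iff, mem_univ, true_imp_iff]
  constructor
  · rintro h v hv rfl
    exact @h (e v).2 (by rwa [Sigma.eta, Equiv.symm_apply_apply])
  · intro h j hj
    simpa using h _ hj

lemma card_firstVars_le (I : Finset (Fin c)) : #(firstVars e I) ≤ #I := by
  refine card_image_le.trans <|
    card_le_card_of_injOn Sigma.fst (fun x hx => (mem_filter.1 hx).2.1) ?_
  intro x hx y hy hxy
  simp only [coe_filter, mem_univ, true_and, Set.mem_ofPred_eq] at hx hy
  exact Sigma.ext hxy ((Fin.heq_ext_iff (congrArg n hxy)).2 (hx.2.trans hy.2.symm))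

lemma IsStaircase.inter_firstVars_nonempty {s : Finset α} (hs : IsStaircase e s) {v : α}
    (hv : v ∈ s) {I : Finset (Fin c)} (hI : (e v).1 ∈ I) : (s ∩ firstVars e I).Nonempty := by
  have hv' : e.symm ⟨(e v).1, (e v).2⟩ ∈ s := by rwa [Sigma.eta, Equiv.symm_apply_apply]
  refine ⟨_, mem_inter.2 ⟨hs _ _ ⟨0, (e v).2.pos⟩ (Nat.zero_le _) hv', ?_⟩⟩
  exact mem_image_of_mem _ (by simp [hI])

lemma le_card_of_pure_powers {A : Finset (Fin c → ℕ)}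
    (hpure : ∀ i, ∃ g ∈ A, (∀ j, j ≠ i → g j = 0) ∧ g i ≠ 0) {C : Finset α}
    (hC : ∀ g ∈ A, (polarize e g ∩ C).Nonempty) : c ≤ #C := by
  refine card_le_card_of_forall_exists_fst (e := e) fun i => ?_
  obtain ⟨g, hg, hg0, -⟩ := hpure i
  obtain ⟨v, hv⟩ := hC g hg
  obtain ⟨hvg, hvC⟩ := mem_inter.1 hv
  refine ⟨v, hvC, by_contra fun hvi => ?_⟩
  have := mem_polarize.1 hvg
  rw [hg0 _ hvi] at this
  exact Nat.not_lt_zero _ this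

lemma exists_supported_in_block {gens : Finset (Finset α)} (hst : ∀ f ∈ gens, IsStaircase e f)
    (hheight : ∀ C : Finset α, (∀ f ∈ gens, (f ∩ C).Nonempty) → c ≤ #C) (i : Fin c) :
    ∃ f ∈ gens, ∀ v ∈ f, (e v).1 = i := by
  by_contra! h
  have hcover : ∀ f ∈ gens, (f ∩ firstVars e (univ.erase i)).Nonempty := fun f hf => by
    obtain ⟨v, hv, hvi⟩ := h f hf
    exact (hst f hf).inter_firstVars_nonempty hv (mem_erase.2 ⟨hvi, mem_univ _⟩)
  have := (hheight _ hcover).trans (card_firstVars_le _)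
  rw [card_erase_of_mem (mem_univ i), card_univ, Fintype.card_fin] at this
  have := i.pos
  omega

theorem _root_.IsPolarizationOfPrimary.exists_isStaircase {gens : Finset (Finset α)}
    (hheight₁ : ∃ C : Finset α, (∀ g ∈ gens, (g ∩ C).Nonempty) ∧ C.card = c)
    (hheight₂ : ∀ C : Finset α, (∀ g ∈ gens, (g ∩ C).Nonempty) → c ≤ C.card)
    (h : IsPolarizationOfPrimary gens) :
    ∃ (n : Fin c → ℕ) (e : α ≃ ((i : Fin c) × Fin (n i))),
      ∀ f ∈ gens, IsStaircase e f := by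
  obtain ⟨c', n, e, A, hAn, hA0, -, hpure, rfl⟩ := h
  obtain rfl : c' = c := by
    obtain ⟨C, hC, rfl⟩ := hheight₁
    refine le_antisymm (le_card_of_pure_powers hpure fun g hg => hC _ (mem_image_of_mem _ hg)) ?_
    calc C.card ≤ #(firstVars e univ) := hheight₂ _ ?_
      _ ≤ c' := (card_firstVars_le univ).trans_eq (card_fin c')
    simp only [forall_mem_image]
    intro g hg
    obtain ⟨v, hv⟩ := polarize_nonempty (e := e) (hAn g hg) (hA0 g hg)
    exact (isStaircase_polarize g).inter_firstVars_nonempty hv (mem_univ _)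
  exact ⟨n, e, forall_mem_image.2 fun g _ => isStaircase_polarize g⟩

theorem isPolarizationOfPrimary_of_isStaircase {gens : Finset (Finset α)}
    (hne : ∀ g ∈ gens, g.Nonempty) (hmin : ∀ g ∈ gens, ∀ g' ∈ gens, g ⊆ g' → g = g')
    (hheight : ∀ C : Finset α, (∀ g ∈ gens, (g ∩ C).Nonempty) → c ≤ C.card)
    (hst : ∀ f ∈ gens, IsStaircase e f) :
    IsPolarizationOfPrimary gens := by
  refine ⟨c, n, e, gens.image (depolarize e), forall_mem_image.2 fun f _ => depolarize_le f,
    forall_mem_image.2 fun f hf h0 => ?_, forall_mem_image.2 fun f hf => forall_mem_image.2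
      fun f' hf' hle => ?_, fun i => ?_, ?_⟩
  · obtain ⟨v, hv⟩ := hne f hf
    exact depolarize_eq_zero_iff.1 (congrFun h0 (e v).1) v hv rfl
  · have hsub := polarize_mono (e := e) hle
    rw [(hst f hf).polarize_depolarize, (hst f' hf').polarize_depolarize] at hsub
    rw [hmin f hf f' hf' hsub]
  · obtain ⟨f, hf, hfi⟩ := exists_supported_in_block hst hheight i
    obtain ⟨v, hv⟩ := hne f hf
    refine ⟨depolarize e f, mem_image_of_mem _ hf, fun j hj => ?_, ?_⟩
    · exact depolarize_eq_zero_iff.2 fun v hv => (hfi v hv).trans_ne hj.symm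
    · exact fun h0 => depolarize_eq_zero_iff.1 h0 v hv (hfi v hv)
  · rw [image_image]
    exact image_id.symm.trans (image_congr fun f hf => (hst f hf).polarize_depolarize.symm)

end Polarization

open Polarization

/-- A squarefree monomial ideal of height `c`, with minimal
generators `gens`, is the polarization of a primary monomial ideal iff there is a
partition `V = ⨆_{i=1}^c {x_{i,1}, …, x_{i,n_i}}` such that every minimal generator
containing `x_{i,j}` contains `x_{i,k}` for all `k ≤ j`. -/
theorem polarization_of_primary_iff_staircase_partition
    (gens : Finset (Finset V))
    (hne : ∀ g ∈ gens, g.Nonempty)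
    (hmin : ∀ g ∈ gens, ∀ g' ∈ gens, g ⊆ g' → g = g')
    (c : ℕ)
    (hheight₁ : ∃ C : Finset V, (∀ g ∈ gens, (g ∩ C).Nonempty) ∧ C.card = c)
    (hheight₂ : ∀ C : Finset V, (∀ g ∈ gens, (g ∩ C).Nonempty) → c ≤ C.card) :
    IsPolarizationOfPrimary gens ↔
      ∃ (n : Fin c → ℕ) (e : V ≃ ((i : Fin c) × Fin (n i))),
        ∀ f ∈ gens, ∀ (i : Fin c) (j k : Fin (n i)), k ≤ j →
          e.symm ⟨i, j⟩ ∈ f → e.symm ⟨i, k⟩ ∈ f :=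
  ⟨fun h => h.exists_isStaircase hheight₁ hheight₂,
    fun ⟨_, _, hst⟩ => isPolarizationOfPrimary_of_isStaircase hne hmin hheight₂ hst⟩
end

section
/- Let I = (x_i y_j : 1 ≤ j ≤ m, x_i ∈ G_j) be a bipartite quadratic monomial ideal in R = k[x₁,…,x_n, y₁,…,y_m] determined by subsets G₁,…,G_m ⊆ {x₁,…,x_n}, and let J = ( ∏_{x_i ∈ F} x_i : F ⊆ {x₁,…,x_n}, F ∩ G_j ≠ ∅ for all j ). Then I = (I + J) ∩ (y₁,…,y_m). -/
/-!
All three ideals are monomial ideals, so membership is decided monomial by monomial, and the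
intersection of two monomial ideals is generated by the least common multiples of their
generators. The lcm of a transversal monomial `∏_{i ∈ F} x_i` with `y_j` is divisible by
`x_i y_j` for any `i ∈ F ∩ G_j`, so `J ∩ (y) ⊆ I`. Since `I ⊆ (y)`, the modular law gives
`(I + J) ∩ (y) = I + J ∩ (y) = I`.
-/

open MvPolynomial

theorem Finsupp.single_add_single_le_sup {σ : Type*} {a b : σ} (hab : a ≠ b) {m n : ℕ}
    {f g : σ →₀ ℕ} (ha : single a m ≤ f) (hb : single b n ≤ g) :
    single a m + single b n ≤ f ⊔ g := by
  rw [Finsupp.single_le_iff] at ha hb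
  intro x
  by_cases hxa : x = a
  · subst hxa
    simpa [single_apply, hab.symm] using le_sup_of_le_left ha
  · by_cases hxb : x = b
    · subst hxb
      simpa [single_apply, hxa, Ne.symm hxa] using le_sup_of_le_right hb
    · simp [Ne.symm hxa, Ne.symm hxb]

namespace MvPolynomial

variable {σ τ : Type*}

theorem span_monomial_image_inf_le {R : Type*} [CommSemiring R] {S T U : Set (σ →₀ ℕ)}
    (h : ∀ s ∈ S, ∀ t ∈ T, ∃ u ∈ U, u ≤ s ⊔ t) :
    Ideal.span ((monomial · (1 : R)) '' S) ⊓ Ideal.span ((monomial · (1 : R)) '' T) ≤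
      Ideal.span ((monomial · (1 : R)) '' U) := by
  rintro x ⟨hS, hT⟩
  rw [SetLike.mem_coe, mem_ideal_span_monomial_image] at hS hT
  rw [mem_ideal_span_monomial_image]
  intro d hd
  obtain ⟨s, hs, hsd⟩ := hS d hd
  obtain ⟨t, ht, htd⟩ := hT d hd
  obtain ⟨u, hu, hut⟩ := h s hs t ht
  exact ⟨u, hu, hut.trans (sup_le hsd htd)⟩

section Bipartite

variable (R : Type*) [CommSemiring R] (G : τ → Finset σ)

noncomputable def bipartiteIdeal : Ideal (MvPolynomial (σ ⊕ τ) R) :=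
  Ideal.span {p | ∃ i j, i ∈ G j ∧ p = X (Sum.inl i) * X (Sum.inr j)}

noncomputable def transversalIdeal : Ideal (MvPolynomial (σ ⊕ τ) R) :=
  Ideal.span
    {p | ∃ F : Finset σ, (∀ j, ∃ i ∈ F, i ∈ G j) ∧ p = ∏ i ∈ F, X (Sum.inl i)}

variable (σ τ) in
noncomputable def rightVarsIdeal : Ideal (MvPolynomial (σ ⊕ τ) R) :=
  Ideal.span {p | ∃ j, p = X (Sum.inr j)}

theorem bipartiteIdeal_eq_span_monomial :
    bipartiteIdeal R G = Ideal.span ((monomial · 1) '' {d | ∃ i j, i ∈ G j ∧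
      d = Finsupp.single (Sum.inl i) 1 + Finsupp.single (Sum.inr j) 1}) := by
  simp [bipartiteIdeal, Set.image, X, monomial_mul, eq_comm]

theorem transversalIdeal_eq_span_monomial :
    transversalIdeal R G = Ideal.span ((monomial · 1) ''
      ((fun F ↦ ∑ i ∈ F, Finsupp.single (Sum.inl i) 1) ''
        {F | ∀ j, ∃ i ∈ F, i ∈ G j})) := by
  simp [transversalIdeal, Set.image, X, monomial_sum_one, eq_comm]

theorem rightVarsIdeal_eq_span_monomial :
    rightVarsIdeal σ τ R = Ideal.span ((monomial · 1) ''
      Set.range fun j ↦ Finsupp.single (Sum.inr j) 1) := by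
  simp [rightVarsIdeal, Set.image, X, eq_comm]

theorem bipartiteIdeal_le_rightVarsIdeal : bipartiteIdeal R G ≤ rightVarsIdeal σ τ R := by
  rw [bipartiteIdeal, Ideal.span_le]
  rintro _ ⟨i, j, -, rfl⟩
  exact Ideal.mul_mem_left _ _ (Ideal.subset_span ⟨j, rfl⟩)

theorem transversalIdeal_inf_rightVarsIdeal_le :
    transversalIdeal R G ⊓ rightVarsIdeal σ τ R ≤ bipartiteIdeal R G := by
  rw [transversalIdeal_eq_span_monomial, rightVarsIdeal_eq_span_monomial,
    bipartiteIdeal_eq_span_monomial]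
  refine span_monomial_image_inf_le ?_
  rintro _ ⟨F, hF, rfl⟩ _ ⟨j, rfl⟩
  obtain ⟨i, hiF, hiG⟩ := hF j
  refine ⟨_, ⟨i, j, hiG, rfl⟩, Finsupp.single_add_single_le_sup Sum.inl_ne_inr ?_ le_rfl⟩
  exact Finset.single_le_sum (f := fun i ↦ Finsupp.single (Sum.inl i) 1)
    (fun _ _ ↦ zero_le) hiF

end Bipartite

theorem bipartiteIdeal_eq_sup_transversalIdeal_inf_rightVarsIdeal (R : Type*) [CommRing R]
    (G : τ → Finset σ) :
    bipartiteIdeal R G =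
      (bipartiteIdeal R G ⊔ transversalIdeal R G) ⊓ rightVarsIdeal σ τ R := by
  rw [sup_inf_assoc_of_le _ (bipartiteIdeal_le_rightVarsIdeal R G),
    sup_eq_left.mpr (transversalIdeal_inf_rightVarsIdeal_le R G)]

end MvPolynomial

/-- Let `I = (x_i y_j : x_i ∈ G_j)` be a bipartite quadratic
monomial ideal in `k[x₁, …, x_n, y₁, …, y_m]` and let
`J = (∏_{x_i ∈ F} x_i : F ∩ G_j ≠ ∅ for all j)` be the ideal of transversal
monomials.  Then `I = (I + J) ∩ (y₁, …, y_m)`. -/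
theorem bipartite_ideal_eq_intersection {n m : ℕ} (k : Type*) [Field k]
    (G : Fin m → Finset (Fin n))
    (I J : Ideal (MvPolynomial (Fin n ⊕ Fin m) k))
    (hI : I = Ideal.span
      {p | ∃ i j, i ∈ G j ∧ p = X (Sum.inl i) * X (Sum.inr j)})
    (hJ : J = Ideal.span
      {p | ∃ F : Finset (Fin n), (∀ j, ∃ i ∈ F, i ∈ G j) ∧
        p = ∏ i ∈ F, X (Sum.inl i)}) :
    I = (I ⊔ J) ⊓ Ideal.span {p | ∃ j, p = (X (Sum.inr j) :
      MvPolynomial (Fin n ⊕ Fin m) k)} := by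
  subst hI hJ
  exact bipartiteIdeal_eq_sup_transversalIdeal_inf_rightVarsIdeal k G
end
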